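/- arXiv:2108.12310 — 2 statements merged into one kernel-verified Lean document; each statement's English description precedes it below -/
import Mathlib

section
/- Let λ ∈ ℂ. Then the range of T_n^d(A) − λ is dense in X_1 ⊕ ⋯ ⊕ X_n for every tuple A ∈ B_n if and only if the range of D_i − λ is dense in X_i for every i = 1, …, n. -/
open Cardinal

noncomputable section

namespace OperatorMatrix

variable {Y : Type*} [SeminormedAddCommGroup Y] [NormedSpace ℂ Y]

/-- `α(T)`: the nullity of `T`, i.e. the dimension of its kernel. -/
def nullity (T : Y →L[ℂ] Y) : Cardinal := Module.rank ℂ (LinearMap.ker (T : Y →ₗ[ℂ] Y))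

/-- `β(T)`: the deficiency of `T`, i.e. the dimension of `Y / R(T)`. -/
def deficiency (T : Y →L[ℂ] Y) : Cardinal := Module.rank ℂ (Y ⧸ LinearMap.range (T : Y →ₗ[ℂ] Y))

/-- `T` is left Fredholm: `α(T) < ∞` and `R(T)` is closed. -/
def LeftFredholm (T : Y →L[ℂ] Y) : Prop :=
  nullity T < ℵ₀ ∧ IsClosed (LinearMap.range (T : Y →ₗ[ℂ] Y) : Set Y)

/-- `T` is right Fredholm: `β(T) < ∞`. -/
def RightFredholm (T : Y →L[ℂ] Y) : Prop := deficiency T < ℵ₀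

/-- `T` is Fredholm: both left and right Fredholm. -/
def Fredholm (T : Y →L[ℂ] Y) : Prop := LeftFredholm T ∧ RightFredholm T

/-- `T` is left Weyl: left Fredholm with `ind T = α(T) - β(T) ≤ 0`. -/
def LeftWeyl (T : Y →L[ℂ] Y) : Prop := LeftFredholm T ∧ nullity T ≤ deficiency T

/-- `T` is right Weyl: right Fredholm with `ind T = α(T) - β(T) ≥ 0`. -/
def RightWeyl (T : Y →L[ℂ] Y) : Prop := RightFredholm T ∧ deficiency T ≤ nullity T

/-- The left essential spectrum. -/
def sigmaLe (T : Y →L[ℂ] Y) : Set ℂ := {lam | ¬ LeftFredholm (T - lam • 1)}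

/-- The right essential spectrum. -/
def sigmaRe (T : Y →L[ℂ] Y) : Set ℂ := {lam | ¬ RightFredholm (T - lam • 1)}

/-- The essential spectrum. -/
def sigmaE (T : Y →L[ℂ] Y) : Set ℂ := {lam | ¬ Fredholm (T - lam • 1)}

/-- The left Weyl spectrum. -/
def sigmaLw (T : Y →L[ℂ] Y) : Set ℂ := {lam | ¬ LeftWeyl (T - lam • 1)}

/-- The right Weyl spectrum. -/
def sigmaRw (T : Y →L[ℂ] Y) : Set ℂ := {lam | ¬ RightWeyl (T - lam • 1)}

/-- The complements condition: `N(T)` is complemented (by a closed subspace), and `R(T)` is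
closed and complemented (by a closed subspace). -/
def ComplementsCondition (T : Y →L[ℂ] Y) : Prop :=
  (∃ q : Submodule ℂ Y, IsClosed (q : Set Y) ∧ IsCompl (LinearMap.ker (T : Y →ₗ[ℂ] Y)) q) ∧
    IsClosed (LinearMap.range (T : Y →ₗ[ℂ] Y) : Set Y) ∧
    ∃ q : Submodule ℂ Y, IsClosed (q : Set Y) ∧ IsCompl (LinearMap.range (T : Y →ₗ[ℂ] Y)) q

/-- `T` is (relatively) regular: `T S T = T` for some bounded `S`. -/
def IsRegularOp (T : Y →L[ℂ] Y) : Prop := ∃ S : Y →L[ℂ] Y, T.comp (S.comp T) = T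

/-- `X ⪯ Z`: `X` embeds in `Z`, i.e. there is a left invertible operator `J : X → Z`. -/
def Embeds (X Z : Type*) [SeminormedAddCommGroup X] [SeminormedAddCommGroup Z]
    [NormedSpace ℂ X] [NormedSpace ℂ Z] : Prop :=
  ∃ (J : X →L[ℂ] Z) (L : Z →L[ℂ] X), L.comp J = ContinuousLinearMap.id ℂ X

/-- `X ⪯ₛ Z`: `X` strongly embeds in `Z`: `X ⪯ Z` and there is `J : X → Z` with
`dim (Z / R(J)) < ∞`. -/
def StrongEmbeds (X Z : Type*) [SeminormedAddCommGroup X] [SeminormedAddCommGroup Z]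
    [NormedSpace ℂ X] [NormedSpace ℂ Z] : Prop :=
  Embeds X Z ∧ ∃ J : X →L[ℂ] Z, Module.rank ℂ (Z ⧸ LinearMap.range (J : X →ₗ[ℂ] Z)) < ℵ₀

/-- `X ≺ Z`: `X` essentially embeds in `Z`: `X ⪯ Z` and `Z / R(T)` is infinite dimensional
for every `T : X → Z`. -/
def EssEmbeds (X Z : Type*) [SeminormedAddCommGroup X] [SeminormedAddCommGroup Z]
    [NormedSpace ℂ X] [NormedSpace ℂ Z] : Prop :=
  Embeds X Z ∧ ∀ T : X →L[ℂ] Z, ℵ₀ ≤ Module.rank ℂ (Z ⧸ LinearMap.range (T : X →ₗ[ℂ] Z))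

/-- `X ≅ Z (u.f.d.s.)`: `X` and `Z` are isomorphic up to a finite dimensional subspace. -/
def UFDS (X Z : Type*) [SeminormedAddCommGroup X] [SeminormedAddCommGroup Z]
    [NormedSpace ℂ X] [NormedSpace ℂ Z] : Prop :=
  ∃ (X₁ F₁ : Submodule ℂ X) (Z₁ F₂ : Submodule ℂ Z),
    IsCompl X₁ F₁ ∧ IsCompl Z₁ F₂ ∧ IsClosed (X₁ : Set X) ∧ IsClosed (F₁ : Set X) ∧
      IsClosed (Z₁ : Set Z) ∧ IsClosed (F₂ : Set Z) ∧
      FiniteDimensional ℂ F₁ ∧ FiniteDimensional ℂ F₂ ∧ Nonempty (X₁ ≃L[ℂ] Z₁)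

/-- The upper triangular operator matrix `T_n^d(A)` with diagonal `D` and strictly upper
triangular entries `A i j` (for `i < j`), acting on `X 0 ⊕ ⋯ ⊕ X (n-1)`. -/
def triUpper {n : ℕ} {X : Fin n → Type*} [∀ i, NormedAddCommGroup (X i)]
    [∀ i, NormedSpace ℂ (X i)] (D : ∀ i, X i →L[ℂ] X i)
    (A : ∀ i j, X j →L[ℂ] X i) : (∀ i, X i) →L[ℂ] (∀ i, X i) :=
  ContinuousLinearMap.pi fun i =>
    (D i).comp (ContinuousLinearMap.proj i) +
      ∑ j ∈ Finset.univ.filter (fun j => i < j), (A i j).comp (ContinuousLinearMap.proj j)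

/-!
Taking every off-diagonal entry to be zero leaves the diagonal operator `⊕ᵢ (Dᵢ - λ)`, whose
range is the product of the ranges of the `Dᵢ - λ`. Conversely, let `S` be the closure of the
range of `T = T_n^d(A) - λ`. The `i`-th column of `T` is `Dᵢ - λ` in position `i` plus entries in
positions `< i`, so by induction on `i` the closed subspace `S` contains every vector supported on
coordinate `i`: the part above the diagonal already lies in `S`, and the diagonal part ranges over
a dense subset of `Xᵢ`.
-/

section DenseRange

variable {ι : Type*} {X Y : ι → Type*}

theorem denseRange_piMap_iff [∀ i, TopologicalSpace (Y i)] [∀ i, Nonempty (Y i)]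
    {f : ∀ i, X i → Y i} : DenseRange (Pi.map f) ↔ ∀ i, DenseRange (f i) := by
  refine ⟨fun h i => ?_, DenseRange.piMap⟩
  have hcomp : DenseRange (Function.eval i ∘ Pi.map f) :=
    (Function.surjective_eval i).denseRange.comp h (continuous_apply i)
  exact hcomp.mono (Set.range_comp_subset_range (Function.eval i) (f i))

variable {R : Type*} [Ring R] [Fintype ι] [LinearOrder ι] [DecidableEq ι]
  [∀ i, AddCommGroup (X i)] [∀ i, Module R (X i)] [∀ i, TopologicalSpace (X i)]
  [∀ i, ContinuousAdd (X i)] [∀ i, ContinuousConstSMul R (X i)]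

theorem denseRange_of_upperTriangular (T : (∀ i, X i) →L[R] (∀ i, X i)) (B : ∀ i, X i → X i)
    (hB : ∀ i, DenseRange (B i)) (hdiag : ∀ i u, T (Pi.single i u) i = B i u)
    (hzero : ∀ i u k, i < k → T (Pi.single i u) k = 0) : DenseRange T := by
  set S := (LinearMap.range (T : (∀ i, X i) →ₗ[R] (∀ i, X i))).topologicalClosure
  have hrange : ∀ x, T x ∈ S := fun x => Submodule.le_topologicalClosure _ ⟨x, rfl⟩
  have hsingle : ∀ i u, Pi.single i u ∈ S := by
    intro i
    induction i using WellFoundedLT.induction with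
    | ind i ih =>
    have hcol : ∀ u, Pi.single i (B i u) ∈ S := by
      intro u
      have hoff : T (Pi.single i u) - Pi.single i (B i u) =
          ∑ k ∈ Finset.univ.filter (· < i), Pi.single k (T (Pi.single i u) k) := by
        ext k
        rcases lt_trichotomy k i with hki | rfl | hik
        · simp [Finset.sum_apply, hki.ne, hki.not_ge]
        · simp [Finset.sum_apply, hdiag]
        · simp [Finset.sum_apply, hik.ne', hzero i u k hik, hik.not_gt]
      have hsum : ∑ k ∈ Finset.univ.filter (· < i), Pi.single k (T (Pi.single i u) k) ∈ S :=
        S.sum_mem fun k hk => ih k (Finset.mem_filter.mp hk).2 _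
      have hdiff := S.sub_mem (hrange (Pi.single i u)) hsum
      rwa [← hoff, sub_sub_cancel] at hdiff
    have hclosed : IsClosed {v | Pi.single i v ∈ S} :=
      (Submodule.isClosed_topologicalClosure _).preimage (continuous_single i)
    intro v
    have hall := hclosed.closure_subset_iff.mpr (Set.range_subset_iff.mpr hcol)
    rw [(hB i).closure_eq] at hall
    exact hall trivial
  refine dense_iff_closure_eq.mpr (Set.eq_univ_of_forall fun x => ?_)
  rw [← Finset.univ_sum_single x]
  exact S.sum_mem fun i _ => hsingle i (x i)

end DenseRange

section TriUpper

variable {n : ℕ} {X : Fin n → Type*} [∀ i, NormedAddCommGroup (X i)] [∀ i, NormedSpace ℂ (X i)]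
  (D : ∀ i, X i →L[ℂ] X i) (A : ∀ i j, X j →L[ℂ] X i)

theorem triUpper_apply (x : ∀ i, X i) (i : Fin n) :
    triUpper D A x i = D i (x i) + ∑ j ∈ Finset.univ.filter (fun j => i < j), A i j (x j) := by
  simp [triUpper]

theorem triUpper_sub_smul_one (lam : ℂ) :
    triUpper D A - lam • 1 = triUpper (fun i => D i - lam • 1) A := by
  ext x i
  simp only [sub_apply, smul_apply, one_apply_eq_self, Pi.sub_apply, Pi.smul_apply,
    triUpper_apply]
  abel

theorem coe_triUpper_zero : ⇑(triUpper D 0) = Pi.map fun i => ⇑(D i) := by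
  ext x i
  simp [triUpper_apply]

theorem triUpper_single_apply_of_le {j i : Fin n} (h : j ≤ i) (u : X j) :
    triUpper D A (Pi.single j u) i = D i (Pi.single j u i) := by
  rw [triUpper_apply, Finset.sum_eq_zero fun k hk => ?_, add_zero]
  rw [Pi.single_eq_of_ne (h.trans_lt (Finset.mem_filter.mp hk).2).ne', map_zero]

theorem triUpper_single_apply_self (j : Fin n) (u : X j) :
    triUpper D A (Pi.single j u) j = D j u := by
  rw [triUpper_single_apply_of_le D A le_rfl, Pi.single_eq_same]

theorem triUpper_single_apply_of_lt {j i : Fin n} (h : j < i) (u : X j) :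
    triUpper D A (Pi.single j u) i = 0 := by
  rw [triUpper_single_apply_of_le D A h.le, Pi.single_eq_of_ne h.ne', map_zero]

theorem denseRange_triUpper {D : ∀ i, X i →L[ℂ] X i} (hD : ∀ i, DenseRange (D i)) :
    DenseRange (triUpper D A) :=
  denseRange_of_upperTriangular _ (fun i => D i) hD (triUpper_single_apply_self D A)
    fun _ _ _ h => triUpper_single_apply_of_lt D A h _

theorem forall_denseRange_triUpper_iff :
    (∀ A : ∀ i j, X j →L[ℂ] X i, DenseRange (triUpper D A)) ↔ ∀ i, DenseRange (D i) := by
  refine ⟨fun h => ?_, fun hD A => denseRange_triUpper A hD⟩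
  rw [← denseRange_piMap_iff, ← coe_triUpper_zero]
  exact h 0

end TriUpper

theorem stmt0_general {n : ℕ} {X : Fin n → Type*}
    [∀ i, NormedAddCommGroup (X i)] [∀ i, NormedSpace ℂ (X i)]
    (D : ∀ i, X i →L[ℂ] X i) (lam : ℂ) :
    (∀ A : ∀ i j, X j →L[ℂ] X i, DenseRange ⇑(triUpper D A - lam • 1)) ↔
      ∀ i, DenseRange ⇑(D i - lam • 1) := by
  simpa only [triUpper_sub_smul_one] using forall_denseRange_triUpper_iff fun i => D i - lam • 1

theorem stmt0 {n : ℕ} (hn : 2 ≤ n) {X : Fin n → Type*}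
    [∀ i, NormedAddCommGroup (X i)] [∀ i, NormedSpace ℂ (X i)] [∀ i, CompleteSpace (X i)]
    (D : ∀ i, X i →L[ℂ] X i) (lam : ℂ) :
    (∀ A : ∀ i j, X j →L[ℂ] X i, DenseRange ⇑(triUpper D A - lam • 1)) ↔
      ∀ i, DenseRange ⇑(D i - lam • 1) :=
  stmt0_general D lam

end OperatorMatrix
end
end

section
/- If Banach spaces X and Y are isomorphic up to a finite dimensional subspace, then at least one of them can be strongly embedded into the other: X ⪯_s Y or Y ⪯_s X. -/
open Cardinal

noncomputable section

namespace OperatorMatrix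

variable {Y : Type*} [SeminormedAddCommGroup Y] [NormedSpace ℂ Y]

/-!
A closed subspace with a finite-dimensional algebraic complement is topologically complemented,
so `X ≃ X₁ × F₁` and `Y ≃ Y₁ × F₂`. If `dim F₁ ≤ dim F₂`, then `g × ι`, with `ι : F₁ → F₂` any
linear injection, is left invertible, which gives `X ⪯ Y`; and `g` composed with the projection
onto `X₁` has range `Y₁`, of finite codimension `dim F₂`. Otherwise the roles of `X` and `Y` swap.
-/

theorem rank_quotient_lt_aleph0_of_isCompl {K V : Type*} [DivisionRing K] [AddCommGroup V]
    [Module K V] {p q : Submodule K V} (h : IsCompl p q) [FiniteDimensional K q] :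
    Module.rank K (V ⧸ p) < ℵ₀ :=
  (p.quotientEquivOfIsCompl q h).rank_eq ▸ Module.rank_lt_aleph0 K q

section

variable {𝕜 E F : Type*} [NontriviallyNormedField 𝕜]
  [NormedAddCommGroup E] [NormedSpace 𝕜 E] [NormedAddCommGroup F] [NormedSpace 𝕜 F]

theorem exists_hasLeftInverse_of_finrank_le [CompleteSpace 𝕜] [FiniteDimensional 𝕜 E]
    [FiniteDimensional 𝕜 F] (h : Module.finrank 𝕜 E ≤ Module.finrank 𝕜 F) :
    ∃ J : E →L[𝕜] F, J.HasLeftInverse := by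
  obtain ⟨f, hf⟩ := finrank_le_iff_exists_linearMap.mp h
  exact ⟨f.toContinuousLinearMap,
    ContinuousLinearMap.HasLeftInverse.of_injective_of_finiteDimensional hf⟩

theorem exists_range_eq_of_isTopCompl {X₁ F₁ : Submodule 𝕜 E} {Y₁ : Submodule 𝕜 F}
    (hX : Submodule.IsTopCompl X₁ F₁) (g : X₁ ≃L[𝕜] Y₁) :
    ∃ J : E →L[𝕜] F, LinearMap.range (J : E →ₗ[𝕜] F) = Y₁ := by
  refine ⟨Y₁.subtypeL ∘L ((g : X₁ →L[𝕜] Y₁) ∘L X₁.projectionOntoL F₁ hX), ?_⟩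
  have hsurj : Function.Surjective ((g : X₁ →L[𝕜] Y₁) ∘L X₁.projectionOntoL F₁ hX) :=
    g.surjective.comp (Submodule.projectionOntoL_surjective hX)
  rw [ContinuousLinearMap.toLinearMap_comp,
    LinearMap.range_comp_of_range_eq_top _ (LinearMap.range_eq_top.mpr hsurj)]
  exact Y₁.range_subtype

end

theorem embeds_iff_exists_hasLeftInverse {E F : Type*} [SeminormedAddCommGroup E]
    [SeminormedAddCommGroup F] [NormedSpace ℂ E] [NormedSpace ℂ F] :
    Embeds E F ↔ ∃ J : E →L[ℂ] F, J.HasLeftInverse :=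
  ⟨fun ⟨J, L, h⟩ => ⟨J, L, fun x => congr($h x)⟩,
    fun ⟨J, L, h⟩ => ⟨J, L, ContinuousLinearMap.ext h⟩⟩

theorem strongEmbeds_of_isTopCompl {E F : Type*} [NormedAddCommGroup E] [NormedSpace ℂ E]
    [NormedAddCommGroup F] [NormedSpace ℂ F] {X₁ F₁ : Submodule ℂ E} {Y₁ F₂ : Submodule ℂ F}
    (hX : Submodule.IsTopCompl X₁ F₁) (hY : Submodule.IsTopCompl Y₁ F₂) [FiniteDimensional ℂ F₁]
    [FiniteDimensional ℂ F₂] (g : X₁ ≃L[ℂ] Y₁)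
    (hdim : Module.finrank ℂ F₁ ≤ Module.finrank ℂ F₂) : StrongEmbeds E F := by
  obtain ⟨ι, hι⟩ := exists_hasLeftInverse_of_finrank_le hdim
  obtain ⟨J, hJ⟩ := exists_range_eq_of_isTopCompl hX g
  let eX := Submodule.prodEquivOfIsTopCompl X₁ F₁ hX
  let eY := Submodule.prodEquivOfIsTopCompl Y₁ F₂ hY
  refine ⟨embeds_iff_exists_hasLeftInverse.mpr ⟨(eY : Y₁ × F₂ →L[ℂ] F) ∘L
    ((g : X₁ →L[ℂ] Y₁).prodMap ι) ∘L (eX.symm : E →L[ℂ] X₁ × F₁), ?_⟩, J, ?_⟩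
  · exact eY.hasLeftInverse.comp ((g.hasLeftInverse.prodMap hι).comp eX.symm.hasLeftInverse)
  · rw [hJ]
    exact rank_quotient_lt_aleph0_of_isCompl hY.isCompl

theorem stmt8_general (X Y : Type*) [NormedAddCommGroup X] [NormedSpace ℂ X]
    [NormedAddCommGroup Y] [NormedSpace ℂ Y]
    (h : UFDS X Y) : StrongEmbeds X Y ∨ StrongEmbeds Y X := by
  obtain ⟨X₁, F₁, Y₁, F₂, hcX, hcY, hX₁, -, hY₁, -, hF₁, hF₂, ⟨g⟩⟩ := h
  have hX := Submodule.IsCompl.isTopCompl_of_isClosed_of_finiteDimensional hcX hX₁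
  have hY := Submodule.IsCompl.isTopCompl_of_isClosed_of_finiteDimensional hcY hY₁
  rcases le_total (Module.finrank ℂ F₁) (Module.finrank ℂ F₂) with hle | hle
  · exact .inl (strongEmbeds_of_isTopCompl hX hY g hle)
  · exact .inr (strongEmbeds_of_isTopCompl hY hX g.symm hle)

theorem stmt8 (X Y : Type*) [NormedAddCommGroup X] [NormedSpace ℂ X]
    [CompleteSpace X] [NormedAddCommGroup Y] [NormedSpace ℂ Y] [CompleteSpace Y]
    (h : UFDS X Y) : StrongEmbeds X Y ∨ StrongEmbeds Y X :=
  stmt8_general X Y h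

end OperatorMatrix
end
end
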